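/- arXiv:1703.06075 — 2 statements merged into one kernel-verified Lean document; each statement's English description precedes it below -/
import Mathlib

section
/- Let m, n, q be positive integers. Then the series Σ_{k=1}^{∞} (−1)^{nk−1} · ( Π_{j=1}^{m−1} F_{nk+jnq} ) / ( Π_{j=0}^{m} L_{nk+jnq} ) converges, and its sum equals (1 / (2 F_{mnq})) · Σ_{k=1}^{q} Π_{j=0}^{m−1} ( F_{nk+jnq} / L_{nk+jnq} ) − q / (2 F_{mnq} · √(5^m)). -/
/-!
The identity `F_{b+c} L_b - F_b L_{b+c} = 2 (-1)^b F_c`, read off from Binet's formulas, turns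
the `k`-th term into `(P_k - P_{k+q}) / (2 F_{mnq})` with `P_k = ∏_{j<m} F_{nk+jnq} / L_{nk+jnq}`.
The partial sums therefore telescope with step `q` to `∑_{k=1}^q (P_k - P_{k+N})`, and
`P_{k+N} → 5^{-m/2}` because `F_t / L_t = 1/√5 - (2/√5) ψ^t / L_t → 1/√5`.
-/

open Filter Topology

/-- The Lucas numbers: `L 0 = 2`, `L 1 = 1`, `L (n+2) = L (n+1) + L n`. -/
def lucas : ℕ → ℕ
  | 0 => 2
  | 1 => 1
  | n + 2 => lucas (n + 1) + lucas n

open Finset Real goldenRatio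

theorem lucas_pos (t : ℕ) : 0 < lucas t := by
  induction t using Nat.twoStepInduction with
  | zero => decide
  | one => decide
  | more t _ ih => exact Nat.add_pos_left ih _

theorem coe_lucas_eq (t : ℕ) : (lucas t : ℝ) = φ ^ t + ψ ^ t := by
  induction t using Nat.twoStepInduction with
  | zero => norm_num [lucas]
  | one => simp [lucas, goldenRatio_add_goldenConj]
  | more t ih ih' =>
    rw [lucas, Nat.cast_add, ih, ih']
    linear_combination (-φ ^ t) * goldenRatio_sq - ψ ^ t * goldenConj_sq

theorem fib_add_mul_lucas_sub_fib_mul_lucas_add (b c : ℕ) :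
    (Nat.fib (b + c) : ℝ) * lucas b - Nat.fib b * lucas (b + c) = 2 * (-1) ^ b * Nat.fib c := by
  have hφψ : φ ^ b * ψ ^ b = (-1) ^ b := by rw [← mul_pow, goldenRatio_mul_goldenConj]
  simp only [coe_fib_eq, coe_lucas_eq, pow_add]
  linear_combination 2 * (φ ^ c - ψ ^ c) / √5 * hφψ

theorem abs_goldenConj_lt_one : |ψ| < 1 :=
  abs_lt.2 ⟨neg_one_lt_goldenConj, goldenConj_neg.trans one_pos⟩

theorem tendsto_fib_div_lucas :
    Tendsto (fun t => (Nat.fib t : ℝ) / lucas t) atTop (𝓝 (1 / √5)) := by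
  have hL : ∀ t, (1 : ℝ) ≤ lucas t := fun t => Nat.one_le_cast.2 (lucas_pos t)
  have hψ : Tendsto (fun t => ψ ^ t / lucas t) atTop (𝓝 0) := by
    refine squeeze_zero_norm (fun t => ?_)
      (tendsto_pow_atTop_nhds_zero_of_abs_lt_one (abs_abs ψ ▸ abs_goldenConj_lt_one))
    rw [norm_div, norm_pow, Real.norm_eq_abs, Real.norm_natCast]
    exact div_le_self (by positivity) (hL t)
  have hsplit : ∀ t, (Nat.fib t : ℝ) / lucas t = 1 / √5 - 2 / √5 * (ψ ^ t / lucas t) := by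
    intro t
    have hL0 : (lucas t : ℝ) ≠ 0 := by linarith [hL t]
    rw [coe_fib_eq]
    field_simp
    linear_combination -coe_lucas_eq t
  simp_rw [hsplit]
  simpa using tendsto_const_nhds.sub (hψ.const_mul (2 / √5))

@[to_additive]
theorem prod_Icc_eq_prod_range_succ {M : Type*} [CommMonoid M] (f : ℕ → M) (N : ℕ) :
    ∏ k ∈ Icc 1 N, f k = ∏ k ∈ range N, f (k + 1) := by
  rw [← Ico_add_one_right_eq_Icc, prod_Ico_eq_prod_range, Nat.add_sub_cancel]
  simp only [add_comm 1]

theorem sum_range_sub_shift_comm {G : Type*} [AddCommGroup G] (f : ℕ → G) (N q : ℕ) :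
    ∑ k ∈ range N, (f k - f (k + q)) = ∑ k ∈ range q, (f k - f (k + N)) := by
  induction N with
  | zero => simp
  | succ N ih =>
    have htel := sum_range_sub (fun k => f (k + N)) q
    simp only [add_right_comm _ 1 N, add_assoc, zero_add, sum_sub_distrib] at htel
    rw [sum_range_succ, ih, sum_sub_distrib, sum_sub_distrib, eq_add_of_sub_eq htel, add_comm q]
    abel

theorem sum_Icc_sub_shift_comm {G : Type*} [AddCommGroup G] (f : ℕ → G) (N q : ℕ) :
    ∑ k ∈ Icc 1 N, (f k - f (k + q)) = ∑ k ∈ Icc 1 q, (f k - f (k + N)) := by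
  simpa only [sum_Icc_eq_sum_range_succ, add_right_comm _ 1] using
    sum_range_sub_shift_comm (fun k => f (k + 1)) N q

noncomputable def fibDivLucasProd (m d b : ℕ) : ℝ :=
  ∏ j ∈ range m, (Nat.fib (b + j * d) : ℝ) / lucas (b + j * d)

theorem tendsto_fibDivLucasProd (m d : ℕ) :
    Tendsto (fibDivLucasProd m d) atTop (𝓝 ((1 / √5) ^ m)) := by
  rw [pow_eq_prod_const]
  exact tendsto_finsetProd (range m) fun j _ =>
    tendsto_fib_div_lucas.comp (tendsto_add_atTop_nat (j * d))

theorem alternating_term_eq_fibDivLucasProd_sub (m d b : ℕ) (hm : 0 < m) (hd : 0 < d)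
    (hb : 0 < b) :
    (-1 : ℝ) ^ (b - 1) * (∏ j ∈ Icc 1 (m - 1), (Nat.fib (b + j * d) : ℝ)) /
        ∏ j ∈ range (m + 1), (lucas (b + j * d) : ℝ) =
      (fibDivLucasProd m d b - fibDivLucasProd m d (b + d)) / (2 * Nat.fib (m * d)) := by
  obtain ⟨m, rfl⟩ : ∃ m', m = m' + 1 := ⟨m - 1, by omega⟩
  obtain ⟨b, rfl⟩ : ∃ b', b = b' + 1 := ⟨b - 1, by omega⟩
  set F : ℕ → ℝ := fun j => Nat.fib (b + 1 + j * d)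
  set L : ℕ → ℝ := fun j => lucas (b + 1 + j * d)
  have hL : ∀ j, L j ≠ 0 := fun j => by positivity [lucas_pos (b + 1 + j * d)]
  have hFm : (Nat.fib ((m + 1) * d) : ℝ) ≠ 0 := by
    exact_mod_cast (Nat.fib_pos.2 (by positivity)).ne'
  have hkey :
      F (m + 1) * L 0 - F 0 * L (m + 1) = 2 * (-1) ^ (b + 1) * Nat.fib ((m + 1) * d) := by
    simpa [F, L] using fib_add_mul_lucas_sub_fib_mul_lucas_add (b + 1) ((m + 1) * d)
  have hden :
      ∏ j ∈ range (m + 1 + 1), L j = L 0 * (∏ j ∈ range m, L (j + 1)) * L (m + 1) := by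
    rw [prod_range_succ, prod_range_succ']
    ring
  have hP :
      fibDivLucasProd (m + 1) d (b + 1) = F 0 / L 0 * ∏ j ∈ range m, F (j + 1) / L (j + 1) := by
    rw [fibDivLucasProd, prod_range_succ', mul_comm]
  have hP' : fibDivLucasProd (m + 1) d (b + 1 + d) =
      (∏ j ∈ range m, F (j + 1) / L (j + 1)) * (F (m + 1) / L (m + 1)) := by
    rw [fibDivLucasProd, prod_range_succ]
    simp only [F, L, add_mul, one_mul, add_assoc, add_comm d]
  simp only [Nat.add_sub_cancel]
  rw [prod_Icc_eq_prod_range_succ, hden, hP, hP', prod_div_distrib]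
  rw [pow_succ] at hkey
  have := prod_ne_zero_iff.2 fun j (_ : j ∈ range m) => hL (j + 1)
  have := hL 0
  have := hL (m + 1)
  field_simp
  linear_combination (∏ j ∈ range m, F (j + 1)) * hkey

/-- Theorem (Lucas denominators, general alternating sum):
`Σ_{k=1}^{∞} (−1)^{nk−1} (Π_{j=1}^{m−1} F_{nk+jnq}) / (Π_{j=0}^{m} L_{nk+jnq})
  = (1/(2F_{mnq})) Σ_{k=1}^{q} Π_{j=0}^{m−1} F_{nk+jnq}/L_{nk+jnq} − q/(2 F_{mnq} √(5^m))`. -/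
theorem stmt_10 (m n q : ℕ) (hm : 0 < m) (hn : 0 < n) (hq : 0 < q) :
    Tendsto (fun N => ∑ k ∈ Finset.Icc 1 N,
        (-1 : ℝ) ^ (n * k - 1) *
          (∏ j ∈ Finset.Icc 1 (m - 1), (Nat.fib (n * k + j * n * q) : ℝ)) /
          ∏ j ∈ Finset.range (m + 1), (lucas (n * k + j * n * q) : ℝ))
      atTop
      (𝓝 ((1 / (2 * (Nat.fib (m * n * q) : ℝ))) *
          (∑ k ∈ Finset.Icc 1 q, ∏ j ∈ Finset.range m,
            (Nat.fib (n * k + j * n * q) : ℝ) / (lucas (n * k + j * n * q) : ℝ))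
        - (q : ℝ) / (2 * (Nat.fib (m * n * q) : ℝ) * Real.sqrt (5 ^ m)))) := by
  simp only [mul_assoc]
  set A : ℕ → ℝ := fun k => fibDivLucasProd m (n * q) (n * k)
  have hlim : Tendsto (fun N => ∑ k ∈ Icc 1 q, (A k - A (k + N))) atTop
      (𝓝 (∑ k ∈ Icc 1 q, (A k - (1 / √5) ^ m))) :=
    tendsto_finsetSum _ fun k _ => tendsto_const_nhds.sub <|
      (tendsto_fibDivLucasProd m (n * q)).comp <| tendsto_atTop_mono
        (fun N => (Nat.le_add_left N k).trans (Nat.le_mul_of_pos_left _ hn)) tendsto_id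
  convert hlim.div_const (2 * (Nat.fib (m * (n * q)) : ℝ)) using 1
  · funext N
    rw [← sum_Icc_sub_shift_comm, sum_div]
    refine sum_congr rfl fun k hk => ?_
    rw [alternating_term_eq_fibDivLucasProd_sub m (n * q) (n * k) hm (by positivity)
      (Nat.mul_pos hn (mem_Icc.1 hk).1), ← mul_add]
  · have hsqrt : √(5 ^ m : ℝ) = √5 ^ m := by
      rw [Real.sqrt_eq_iff_mul_self_eq (by positivity) (by positivity), ← mul_pow,
        Real.mul_self_sqrt (by norm_num)]
    rw [sum_sub_distrib, sum_const, Nat.card_Icc, Nat.add_sub_cancel, nsmul_eq_mul, hsqrt]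
    simp only [A, fibDivLucasProd]
    congr 1
    ring
end

section
/- Let m, n, q be positive integers such that q is even or mnq is odd. Then the series Σ_{k=1}^{∞} (−1)^{k−1} · L_{nk+mnq} / ( Π_{j=0}^{2m} F_{nk+njq} ) converges, and its sum equals (1 / F_{mnq}) · Σ_{k=1}^{q} (−1)^{k−1} / ( Π_{j=0}^{2m−1} F_{nk+njq} ). -/
/-!
Put `b k = (-1)^(k-1) / ∏_{j<2m} F_{nk+njq}`. Binet's formulas give
`F_{mnq} L_{a+mnq} = F_{a+2mnq} - (-1)^{mnq} F_a`, and the parity hypothesis makes `(-1)^{mnq} = (-1)^q`;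
with `a = nk`, the two ends of the product `∏_{j≤2m} F_{nk+njq}` turn the `k`-th term of the series into
`(b k - b (k+q)) / F_{mnq}`. So the partial sums telescope with period `q`, and as the products grow to
infinity, `b k → 0` and the sum is `(b 1 + ⋯ + b q) / F_{mnq}`.
-/

open Filter Topology

open Finset Real goldenRatio

section Telescoping

variable {M : Type*} [AddCommGroup M]

theorem Finset.sum_range_sub_shift (f : ℕ → M) (q N : ℕ) :
    ∑ k ∈ range N, (f k - f (k + q)) = ∑ k ∈ range q, f k - ∑ k ∈ range q, f (N + k) := by
  induction N with
  | zero => simp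
  | succ N ih =>
    have hshift : ∑ k ∈ range q, f (N + 1 + k) = ∑ k ∈ range q, f (N + k) + f (N + q) - f N := by
      simp_rw [add_right_comm N 1, eq_sub_iff_add_eq]
      exact (sum_range_succ' (fun k => f (N + k)) q).symm.trans (sum_range_succ _ q)
    rw [sum_range_succ, ih, hshift]
    abel

theorem Finset.sum_Icc_one_eq_sum_range (f : ℕ → M) (N : ℕ) :
    ∑ k ∈ Icc 1 N, f k = ∑ k ∈ range N, f (k + 1) := by
  rw [← Ico_add_one_right_eq_Icc, sum_Ico_eq_sum_range]
  simp [add_comm]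

variable [TopologicalSpace M] [IsTopologicalAddGroup M]

theorem tendsto_sum_range_sub_shift {f : ℕ → M} (hf : Tendsto f atTop (𝓝 0)) (q : ℕ) :
    Tendsto (fun N => ∑ k ∈ range N, (f k - f (k + q))) atTop (𝓝 (∑ k ∈ range q, f k)) := by
  have htail : Tendsto (fun N => ∑ k ∈ range q, f (N + k)) atTop (𝓝 0) := by
    simpa using tendsto_finsetSum (range q) fun k _ => hf.comp (tendsto_add_atTop_nat k)
  simp_rw [sum_range_sub_shift]
  simpa using tendsto_const_nhds.sub htail

theorem tendsto_sum_Icc_sub_shift {f : ℕ → M} (hf : Tendsto f atTop (𝓝 0)) (q : ℕ) :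
    Tendsto (fun N => ∑ k ∈ Icc 1 N, (f k - f (k + q))) atTop (𝓝 (∑ k ∈ Icc 1 q, f k)) := by
  simpa only [sum_Icc_one_eq_sum_range, Function.comp_def, add_right_comm _ q 1] using
    tendsto_sum_range_sub_shift (hf.comp (tendsto_add_atTop_nat 1)) q

end Telescoping

theorem neg_one_pow_mul_eq_of_even_or_odd {R : Type*} [Monoid R] [HasDistribNeg R] {a q : ℕ}
    (h : Even q ∨ Odd (a * q)) : (-1 : R) ^ (a * q) = (-1) ^ q := by
  rcases h with hq | hodd
  · rw [(hq.mul_left a).neg_one_pow, hq.neg_one_pow]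
  · rw [hodd.neg_one_pow, (Nat.odd_mul.mp hodd).2.neg_one_pow]

theorem lucas_eq_goldenRatio_pow_add (n : ℕ) : (lucas n : ℝ) = φ ^ n + ψ ^ n := by
  induction n using Nat.twoStepInduction with
  | zero => norm_num [lucas]
  | one => norm_num [lucas]
  | more n ih₂ ih₁ =>
    rw [lucas, Nat.cast_add, ih₁, ih₂, pow_add φ n 2, pow_add ψ n 2, goldenRatio_sq, goldenConj_sq]
    ring

theorem fib_mul_lucas_add (a b : ℕ) :
    (Nat.fib b : ℝ) * lucas (a + b) = Nat.fib (a + 2 * b) - (-1) ^ b * Nat.fib a := by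
  rw [coe_fib_eq, coe_fib_eq, coe_fib_eq, lucas_eq_goldenRatio_pow_add, ← goldenRatio_mul_goldenConj,
    mul_pow]
  ring

theorem Nat.tendsto_fib_atTop : Tendsto Nat.fib atTop atTop :=
  (tendsto_add_atTop_iff_nat 2).mp Nat.fib_add_two_strictMono.tendsto_atTop

noncomputable def fibProd (n q r k : ℕ) : ℝ := ∏ j ∈ range r, (Nat.fib (n * k + n * j * q) : ℝ)

section FibProd

variable (n q r : ℕ)

theorem fibProd_succ (k : ℕ) :
    fibProd n q (r + 1) k = fibProd n q r k * Nat.fib (n * k + n * r * q) :=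
  prod_range_succ _ r

theorem fibProd_succ' (k : ℕ) :
    fibProd n q (r + 1) k = Nat.fib (n * k) * fibProd n q r (k + q) := by
  rw [fibProd, prod_range_succ', mul_comm, mul_zero, zero_mul, add_zero, fibProd]
  congr 1
  refine prod_congr rfl fun j _ => ?_
  ring_nf

theorem one_le_fibProd (hn : 0 < n) {k : ℕ} (hk : 0 < k) : 1 ≤ fibProd n q r k := by
  refine one_le_prod fun j _ => ?_
  exact_mod_cast Nat.fib_pos.mpr (by positivity)

theorem tendsto_fibProd_atTop (hn : 0 < n) (hr : 0 < r) :
    Tendsto (fibProd n q r) atTop atTop := by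
  obtain ⟨r, rfl⟩ := Nat.exists_eq_succ_of_ne_zero hr.ne'
  have hfib : Tendsto (fun k => (Nat.fib (n * k) : ℝ)) atTop atTop :=
    tendsto_natCast_atTop_atTop.comp <|
      Nat.tendsto_fib_atTop.comp (tendsto_atTop_mono (Nat.le_mul_of_pos_left · hn) tendsto_id)
  refine tendsto_atTop_mono' atTop ?_ hfib
  filter_upwards [eventually_gt_atTop 0] with k hk
  rw [fibProd_succ']
  exact le_mul_of_one_le_right (Nat.cast_nonneg _) (one_le_fibProd n q r hn (by omega))

theorem tendsto_neg_one_pow_div_fibProd (hn : 0 < n) (hr : 0 < r) :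
    Tendsto (fun k => (-1 : ℝ) ^ (k - 1) / fibProd n q r k) atTop (𝓝 0) := by
  refine squeeze_zero_norm (fun k => le_of_eq ?_)
    (tendsto_norm_atTop_atTop.comp (tendsto_fibProd_atTop n q r hn hr)).inv_tendsto_atTop
  simp [norm_div]

end FibProd

theorem neg_one_pow_mul_lucas_div_fibProd {m n q k : ℕ} (hn : 0 < n) (hk : 0 < k)
    (hF : (Nat.fib (m * n * q) : ℝ) ≠ 0) (hsign : (-1 : ℝ) ^ (m * n * q) = (-1) ^ q) :
    (-1 : ℝ) ^ (k - 1) * lucas (n * k + m * n * q) / fibProd n q (2 * m + 1) k =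
      1 / Nat.fib (m * n * q) * ((-1) ^ (k - 1) / fibProd n q (2 * m) k -
        (-1) ^ (k + q - 1) / fibProd n q (2 * m) (k + q)) := by
  have hlucas : (Nat.fib (m * n * q) : ℝ) * lucas (n * k + m * n * q) =
      Nat.fib (n * k + n * (2 * m) * q) - (-1) ^ q * Nat.fib (n * k) := by
    rw [fib_mul_lucas_add, hsign]
    ring_nf
  have hsign' : (-1 : ℝ) ^ (k + q - 1) = (-1) ^ (k - 1) * (-1) ^ q := by
    rw [← pow_add]
    congr 1
    omega
  have hP := (zero_lt_one.trans_le (one_le_fibProd n q (2 * m) hn hk)).ne'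
  have hP' := (zero_lt_one.trans_le (one_le_fibProd n q (2 * m) hn (by omega : 0 < k + q))).ne'
  have hsplit := (fibProd_succ n q (2 * m) k).symm.trans (fibProd_succ' n q (2 * m) k)
  rw [fibProd_succ, hsign']
  field_simp
  linear_combination fibProd n q (2 * m) (k + q) * hlucas + (-1) ^ q * hsplit

/-- Theorem (`q` even or `mnq` odd):
`Σ_{k=1}^{∞} (−1)^{k−1} L_{nk+mnq} / (Π_{j=0}^{2m} F_{nk+njq})
  = (1/F_{mnq}) Σ_{k=1}^{q} (−1)^{k−1}/(Π_{j=0}^{2m−1} F_{nk+njq})`. -/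
theorem stmt_13 (m n q : ℕ) (hm : 0 < m) (hn : 0 < n) (hq : 0 < q)
    (h : Even q ∨ Odd (m * n * q)) :
    Tendsto (fun N => ∑ k ∈ Finset.Icc 1 N,
        (-1 : ℝ) ^ (k - 1) * (lucas (n * k + m * n * q) : ℝ) /
          ∏ j ∈ Finset.range (2 * m + 1), (Nat.fib (n * k + n * j * q) : ℝ))
      atTop
      (𝓝 ((1 / (Nat.fib (m * n * q) : ℝ)) *
        ∑ k ∈ Finset.Icc 1 q,
          (-1 : ℝ) ^ (k - 1) / ∏ j ∈ Finset.range (2 * m), (Nat.fib (n * k + n * j * q) : ℝ))) := by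
  have hF : (Nat.fib (m * n * q) : ℝ) ≠ 0 := by exact_mod_cast (Nat.fib_pos.mpr (by positivity)).ne'
  have hsign : (-1 : ℝ) ^ (m * n * q) = (-1) ^ q := neg_one_pow_mul_eq_of_even_or_odd h
  have htele := (tendsto_sum_Icc_sub_shift
    (tendsto_neg_one_pow_div_fibProd n q (2 * m) hn (by positivity)) q).const_mul
      (1 / (Nat.fib (m * n * q) : ℝ))
  refine htele.congr fun N => ?_
  rw [mul_sum]
  exact sum_congr rfl fun k hk =>
    (neg_one_pow_mul_lucas_div_fibProd hn (mem_Icc.mp hk).1 hF hsign).symm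
end
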